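/- Assume r/2 < t ≤ t′, σ − n/2 > t′ − r/2, 2d̃ + r > 0 and a > 0, and assume the function D is symmetric, i.e. D(λ,λ′) = D(λ′,λ) for all index pairs. Then for every J ∈ ℕ and every pair of indices (λ,λ′) = ((j,k),(j′,k′)) with j > j′: if (λ,λ′) ∈ supp_D(J,t,t′), then (λ′,λ) ∈ supp_D(J,t,t′). -/

import Mathlib

/-! Swapping the pair changes each slope condition, and the exponent of the threshold, by a
multiple of `(j - j')(t' - t) ≥ 0`, always in the favourable direction. -/

/-- The compression threshold
`τ_{jj'} = a · max{2^{−min(j,j')}, 2^{(J(t+t'−r) − jt' − j't − (j+j')d̃)/(2d̃+r)}}`. -/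
noncomputable def tauThresh (r t t' dtil a : ℝ) (J j j' : ℕ) : ℝ :=
  a * max ((2 : ℝ) ^ (-((min j j' : ℕ) : ℝ)))
      ((2 : ℝ) ^ (((J : ℝ) * (t + t' - r) - (j : ℝ) * t' - (j' : ℝ) * t
        - ((j : ℝ) + (j' : ℝ)) * dtil) / (2 * dtil + r)))

noncomputable def suppD {K : Type*} (n r σ dtil a : ℝ) (D : ℕ × K → ℕ × K → ℝ)
    (J : ℕ) (t t' : ℝ) : Set ((ℕ × K) × (ℕ × K)) :=
  {p | p.1.1 ≤ J ∧ p.2.1 ≤ J ∧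
    D p.1 p.2 ≤ tauThresh r t t' dtil a J p.1.1 p.2.1 ∧
    (p.1.1 : ℝ) ≤ ((t + t' - r) * J + (σ - n / 2 - (t - r / 2)) * p.2.1)
        / (σ - n / 2 + t' - r / 2) ∧
    (p.2.1 : ℝ) ≤ ((t + t' - r) * J + (σ - n / 2 - (t' - r / 2)) * p.1.1)
        / (σ - n / 2 + t - r / 2)}

lemma tauThresh_le_tauThresh_swap {r t t' dtil a : ℝ} {J j j' : ℕ} (ht : t ≤ t')
    (hd : 0 < 2 * dtil + r) (ha : 0 ≤ a) (hj : j' ≤ j) :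
    tauThresh r t t' dtil a J j j' ≤ tauThresh r t t' dtil a J j' j := by
  have hjR : (j' : ℝ) ≤ j := by exact_mod_cast hj
  unfold tauThresh
  rw [min_comm j]
  gcongr a * max _ ((2 : ℝ) ^ (?_ / _))
  · norm_num
  · nlinarith [mul_nonneg (sub_nonneg.mpr hjR) (sub_nonneg.mpr ht)]

section Slope

variable {s r t t' c x x' : ℝ}

lemma le_slope_of_le_slope_swap (ht : t ≤ t') (hx : x' ≤ x) (hpos : 0 < s + t - r / 2)
    (hpos' : 0 < s + t' - r / 2) (h : x' ≤ (c + (s - (t' - r / 2)) * x) / (s + t - r / 2)) :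
    x' ≤ (c + (s - (t - r / 2)) * x) / (s + t' - r / 2) := by
  rw [le_div_iff₀ hpos] at h
  rw [le_div_iff₀ hpos']
  nlinarith [mul_nonneg (sub_nonneg.mpr hx) (sub_nonneg.mpr ht)]

lemma le_slope_swap_of_le_slope (ht : t ≤ t') (hx : x' ≤ x) (hpos : 0 < s + t - r / 2)
    (hpos' : 0 < s + t' - r / 2) (h : x ≤ (c + (s - (t - r / 2)) * x') / (s + t' - r / 2)) :
    x ≤ (c + (s - (t' - r / 2)) * x') / (s + t - r / 2) := by
  rw [le_div_iff₀ hpos'] at h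
  rw [le_div_iff₀ hpos]
  nlinarith [mul_nonneg (sub_nonneg.mpr hx) (sub_nonneg.mpr ht)]

end Slope

theorem supp_symmetric_transfer {K : Type*}
    (n r σ t t' dtil a : ℝ)
    (h1 : r / 2 < t) (h2 : t ≤ t') (h3 : σ - n / 2 > t' - r / 2)
    (h4 : 0 < 2 * dtil + r) (ha : 0 < a)
    (D : ℕ × K → ℕ × K → ℝ) (hD : ∀ p q, D p q = D q p)
    (J : ℕ) (j j' : ℕ) (k k' : K) (hjj : j' < j)
    (hmem : ((j, k), (j', k')) ∈ suppD n r σ dtil a D J t t') :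
    ((j', k'), (j, k)) ∈ suppD n r σ dtil a D J t t' := by
  obtain ⟨hj, hj', hτ, hslope, hslope'⟩ := hmem
  have hjj' : (j' : ℝ) ≤ j := by exact_mod_cast hjj.le
  have hpos' : 0 < σ - n / 2 + t' - r / 2 := by linarith
  have hpos : 0 < σ - n / 2 + t - r / 2 := by linarith
  refine ⟨hj', hj, ?_, le_slope_of_le_slope_swap h2 hjj' hpos hpos' hslope',
    le_slope_swap_of_le_slope h2 hjj' hpos hpos' hslope⟩
  rw [hD]
  exact hτ.trans (tauThresh_le_tauThresh_swap h2 h4 ha.le hjj.le)
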